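/- The optimal expected cancellation cost is monotone under adding patients and removing operating rooms: if Ŝ ⊆ S' ⊆ P and 1 ≤ y' ≤ ŷ, then Q(S', y') ≥ Q(Ŝ, ŷ). (This is the core of the validity of the three-stage logic-based Benders optimality cut: when the same or more patients are assigned to a hospital-day pair and the same or fewer ORs are opened, the optimal expected cancellation cost cannot decrease.) -/
import Mathlib


open Finset

/-- The single-OR cancellation cost of a set `A` of patients assigned to an operating
room with time limit `B`, for duration function `T`. -/
noncomputable def qcost {α : Type*} [DecidableEq α] (c T : α → ℝ) {B : ℝ} (hB : 0 ≤ B)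
    (A : Finset α) : ℝ :=
  (A.powerset.filter (fun Z => ∑ p ∈ Z, T p ≤ B)).inf'
    ⟨∅, by simp [hB]⟩ (fun Z => ∑ p ∈ A \ Z, c p)

/-- The optimal expected cancellation cost of assigning the patients of `S` to `y`
opened operating rooms: the minimum, over assignments `a` of patients to ORs, of the
average over scenarios `s ∈ 𝒮` of the sum over ORs `r` of the single-OR cancellation
cost of the patients of `S` assigned to `r`. -/
noncomputable def Qexp {α σ : Type*} [DecidableEq α] (c : α → ℝ) (𝒮 : Finset σ)
    (T : σ → α → ℝ) {B : ℝ} (hB : 0 ≤ B) (S : Finset α) (y : ℕ) : ℝ :=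
  sInf { v : ℝ | ∃ a : α → Fin y,
    v = (𝒮.card : ℝ)⁻¹ *
      ∑ s ∈ 𝒮, ∑ r : Fin y, qcost c (T s) hB (S.filter (fun p => a p = r)) }

lemma qcost_nonneg {α : Type*} [DecidableEq α] {c T : α → ℝ} {B : ℝ} (hB : 0 ≤ B)
    {A : Finset α} (hc : ∀ p ∈ A, 0 ≤ c p) : 0 ≤ qcost c T hB A := by
  apply Finset.le_inf'
  intro Z hZ
  exact Finset.sum_nonneg fun p hp => hc p (Finset.mem_sdiff.mp hp).1

lemma qcost_empty {α : Type*} [DecidableEq α] (c T : α → ℝ) {B : ℝ} (hB : 0 ≤ B) :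
    qcost c T hB (∅ : Finset α) = 0 := by
  simp [qcost, hB]

lemma qcost_mono {α : Type*} [DecidableEq α] {c T : α → ℝ} {B : ℝ} (hB : 0 ≤ B)
    {A A' : Finset α} (hc : ∀ p ∈ A', 0 ≤ c p) (hT : ∀ p ∈ A', 0 ≤ T p)
    (h : A ⊆ A') : qcost c T hB A ≤ qcost c T hB A' := by
  apply Finset.le_inf'
  intro Z' hZ'
  rw [Finset.mem_filter, Finset.mem_powerset] at hZ'
  obtain ⟨hZ'sub, hZ'B⟩ := hZ'
  have hmem : Z' ∩ A ∈ A.powerset.filter (fun Z => ∑ p ∈ Z, T p ≤ B) := by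
    rw [Finset.mem_filter, Finset.mem_powerset]
    refine ⟨Finset.inter_subset_right, le_trans ?_ hZ'B⟩
    exact Finset.sum_le_sum_of_subset_of_nonneg Finset.inter_subset_left
      fun p hp _ => hT p (hZ'sub hp)
  refine le_trans (Finset.inf'_le _ hmem) ?_
  apply Finset.sum_le_sum_of_subset_of_nonneg
  · intro x hx
    rw [Finset.mem_sdiff] at hx ⊢
    exact ⟨h hx.1, fun hxZ' => hx.2 (Finset.mem_inter.mpr ⟨hxZ', hx.1⟩)⟩
  · exact fun p hp _ => hc p (Finset.mem_sdiff.mp hp).1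

/-- Monotonicity of the optimal expected cancellation cost under adding patients and
removing operating rooms: if `Ŝ ⊆ S' ⊆ P` and `1 ≤ y' ≤ ŷ`, then
`Q(S', y') ≥ Q(Ŝ, ŷ)`. -/
theorem Qexp_monotone_patients_rooms {α σ : Type*} [DecidableEq α]
    (P : Finset α) (c : α → ℝ) (𝒮 : Finset σ) (h𝒮 : 𝒮.Nonempty)
    (T : σ → α → ℝ) (B : ℝ)
    (hc : ∀ p ∈ P, 0 ≤ c p) (hT : ∀ s ∈ 𝒮, ∀ p ∈ P, 0 ≤ T s p) (hB : 0 ≤ B)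
    (Shat S' : Finset α) (hsub : Shat ⊆ S') (hS' : S' ⊆ P)
    (yhat y' : ℕ) (hy'1 : 1 ≤ y') (hy' : y' ≤ yhat) :
    Qexp c 𝒮 T hB S' y' ≥ Qexp c 𝒮 T hB Shat yhat := by
  have hy'pos : 0 < y' := hy'1
  have hbdd : BddBelow { v : ℝ | ∃ a : α → Fin yhat,
      v = (𝒮.card : ℝ)⁻¹ *
        ∑ s ∈ 𝒮, ∑ r : Fin yhat, qcost c (T s) hB (Shat.filter (fun p => a p = r)) } := by
    refine ⟨0, ?_⟩
    rintro v ⟨a, rfl⟩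
    refine mul_nonneg (by positivity) (Finset.sum_nonneg fun s hs => Finset.sum_nonneg
      fun r _ => qcost_nonneg hB ?_)
    intro p hp
    exact hc p (hS' (hsub (Finset.mem_of_mem_filter p hp)))
  refine le_csInf ?_ ?_
  · exact ⟨_, fun _ => (⟨0, hy'pos⟩ : Fin y'), rfl⟩
  rintro v ⟨a, rfl⟩
  refine le_trans (csInf_le hbdd ⟨fun p => Fin.castLE hy' (a p), rfl⟩) ?_
  refine mul_le_mul_of_nonneg_left (Finset.sum_le_sum fun s hs => ?_) (by positivity)
  have hkey : ∑ r : Fin yhat,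
      qcost c (T s) hB (Shat.filter (fun p => Fin.castLE hy' (a p) = r))
      = ∑ r : Fin y',
      qcost c (T s) hB (Shat.filter (fun p => a p = r)) := by
    set f : Fin yhat → ℝ := fun r => qcost c (T s) hB
      (Shat.filter (fun p => Fin.castLE hy' (a p) = r)) with hf
    calc ∑ r : Fin yhat, f r
        = ∑ r ∈ (Finset.univ : Finset (Fin y')).image (Fin.castLE hy'), f r := by
          symm
          refine Finset.sum_subset (Finset.subset_univ _) ?_
          intro r _ hr
          have : Shat.filter (fun p => Fin.castLE hy' (a p) = r) = ∅ := by
            refine Finset.filter_eq_empty_iff.mpr fun p _ h => hr ?_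
            exact h ▸ Finset.mem_image_of_mem _ (Finset.mem_univ _)
          simp [hf, this, qcost_empty]
      _ = ∑ r₀ : Fin y', f (Fin.castLE hy' r₀) :=
          Finset.sum_image fun x _ y _ h => Fin.castLE_injective hy' h
      _ = ∑ r₀ : Fin y', qcost c (T s) hB (Shat.filter (fun p => a p = r₀)) := by
          refine Finset.sum_congr rfl fun r₀ _ => ?_
          simp only [hf]
          congr 1
          refine Finset.filter_congr fun p _ => ?_
          simp [(Fin.castLE_injective hy').eq_iff]
  rw [hkey]
  refine Finset.sum_le_sum fun r _ => qcost_mono hB ?_ ?_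
    (Finset.filter_subset_filter _ hsub)
  · exact fun p hp => hc p (hS' (Finset.mem_of_mem_filter p hp))
  · exact fun p hp => hT s hs p (hS' (Finset.mem_of_mem_filter p hp))
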